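/- arXiv:1510.00293 — 5 statements merged into one kernel-verified Lean document; each statement's English description precedes it below -/
import Mathlib

section
/- Let w1, w2, q, n be positive integers with w1 < w2, q ≥ 2 and w2 + (q-1)·w1 ≤ n. Then there exists an SHF(N; n, q, {w1^{q-1}, w2}), i.e., a family of N functions from an n-set to a q-set such that every choice of q pairwise disjoint column subsets, q-1 of them of size w1 and one of size w2, is separated by some function, where N = (1/(q-1)!) · C(n, w1) · C(n - w1, w1) · C(n - 2·w1, w1) · ⋯ · C(n - (q-2)·w1, w1). -/
/-!
For each unordered collection of `q - 1` pairwise disjoint `w1`-subsets, list its blocks in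
some fixed order and take the function colouring the `j`-th block `j` and every other point
`q - 1`. Given disjoint `X 0, …, X (q - 1)`, the function attached to `{X 0, …, X (q - 2)}`
sends these blocks to distinct colours and `X (q - 1)` to the remaining one. Ordered tuples of
such blocks number `∏ C(n - j w1, w1)`; as `w1 > 0` the blocks of a tuple are distinct, so every
collection arises from exactly `(q - 1)!` tuples.
-/

/-- `F` is a separating hash family of type `{w 0, w 1, ..., w (t-1)}`:
for every choice of pairwise disjoint subsets `X i` of the domain with
`|X i| = w i`, some function in the family maps them to pairwise disjoint
image sets. -/
def IsSHF {N n q t : ℕ} (F : Fin N → Fin n → Fin q) (w : Fin t → ℕ) : Prop :=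
  ∀ X : Fin t → Finset (Fin n),
    (∀ i, (X i).card = w i) →
    (∀ i j, i ≠ j → Disjoint (X i) (X j)) →
    ∃ k : Fin N, ∀ i j, i ≠ j →
      Disjoint ((X i).image (F k)) ((X j).image (F k))

open Finset Function
open scoped Nat

section DisjointTuples

open Classical in
noncomputable def disjointTuples (α : Type*) [Fintype α] (w t : ℕ) :
    Finset (Fin t → Finset α) :=
  {g | (∀ j, #(g j) = w) ∧ Pairwise (Disjoint on g)}

variable {α : Type*} [Fintype α] {w t : ℕ}

theorem mem_disjointTuples {g : Fin t → Finset α} :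
    g ∈ disjointTuples α w t ↔ (∀ j, #(g j) = w) ∧ Pairwise (Disjoint on g) := by
  simp [disjointTuples]

theorem injective_of_mem_disjointTuples (hw : 0 < w) {g : Fin t → Finset α}
    (hg : g ∈ disjointTuples α w t) : Injective g := by
  rw [mem_disjointTuples] at hg
  intro a b hab
  by_contra hne
  have hempty := hg.2 hne
  rw [onFun, hab, disjoint_self_iff_empty, ← card_eq_zero, hg.1] at hempty
  omega

theorem comp_perm_mem_disjointTuples {g : Fin t → Finset α} (hg : g ∈ disjointTuples α w t)
    (σ : Equiv.Perm (Fin t)) : g ∘ σ ∈ disjointTuples α w t := by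
  rw [mem_disjointTuples] at hg ⊢
  exact ⟨fun j => hg.1 (σ j), hg.2.comp_of_injective σ.injective⟩

variable [DecidableEq α]

theorem cons_mem_disjointTuples_iff {A : Finset α} {g : Fin t → Finset α} :
    Fin.cons A g ∈ disjointTuples α w (t + 1) ↔
      A ∈ powersetCard w (univ.biUnion g)ᶜ ∧ g ∈ disjointTuples α w t := by
  simp only [mem_disjointTuples, mem_powersetCard, Fin.forall_fin_succ, Fin.cons_zero,
    Fin.cons_succ, pairwise_fin_succ_iff_of_isSymm, onFun, subset_compl_iff_disjoint_right,
    disjoint_biUnion_right, mem_univ, true_implies]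
  tauto

theorem card_biUnion_of_mem_disjointTuples {g : Fin t → Finset α}
    (hg : g ∈ disjointTuples α w t) : #(univ.biUnion g) = t * w := by
  rw [mem_disjointTuples] at hg
  rw [card_biUnion (hg.2.set_pairwise _)]
  simp [hg.1]

theorem card_disjointTuples_succ :
    #(disjointTuples α w (t + 1)) =
      #(disjointTuples α w t) * (Fintype.card α - t * w).choose w := by
  have hbij : #(disjointTuples α w (t + 1)) =
      #((disjointTuples α w t).sigma fun g => powersetCard w (univ.biUnion g)ᶜ) := by
    refine card_nbij' (fun g => ⟨Fin.tail g, g 0⟩) (fun p => Fin.cons p.2 p.1) ?_ ?_ ?_ ?_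
    · intro g hg
      rw [mem_coe, ← Fin.cons_self_tail g, cons_mem_disjointTuples_iff] at hg
      simpa [mem_sigma] using hg.symm
    · rintro ⟨g, A⟩ h
      simpa [cons_mem_disjointTuples_iff, and_comm] using h
    · intro g _
      exact Fin.cons_self_tail g
    · rintro ⟨g, A⟩ _
      simp
  rw [hbij, card_sigma, sum_congr rfl fun g hg => by
    rw [card_powersetCard, card_compl, card_biUnion_of_mem_disjointTuples hg],
    sum_const, smul_eq_mul]

theorem card_disjointTuples :
    #(disjointTuples α w t) = ∏ j ∈ range t, (Fintype.card α - j * w).choose w := by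
  induction t with
  | zero => simp [disjointTuples, Subsingleton.elim _ (fun i : Fin 0 => i.elim0)]
  | succ t ih => rw [card_disjointTuples_succ, ih, prod_range_succ]

end DisjointTuples

theorem exists_perm_comp_eq_of_range_eq {β : Type*} {t : ℕ} {g g' : Fin t → β}
    (hg : Injective g) (hg' : Injective g') (h : Set.range g' = Set.range g) :
    ∃ σ : Equiv.Perm (Fin t), g ∘ σ = g' :=
  ⟨(Equiv.ofInjective g' hg').trans ((Equiv.setCongr h).trans (Equiv.ofInjective g hg).symm),
    funext fun j => by simp [Equiv.apply_ofInjective_symm]⟩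

open Classical in
theorem card_eq_card_image_range_mul_factorial {β : Type*} {t : ℕ} (T : Finset (Fin t → β))
    (hinj : ∀ g ∈ T, Injective g)
    (hperm : ∀ g ∈ T, ∀ σ : Equiv.Perm (Fin t), g ∘ σ ∈ T) :
    #T = #(T.image Set.range) * t ! := by
  rw [card_eq_sum_card_image Set.range, ← smul_eq_mul, ← sum_const]
  refine sum_congr rfl fun s hs => ?_
  obtain ⟨g₀, hg₀, rfl⟩ := mem_image.1 hs
  have hfiber : {g ∈ T | Set.range g = Set.range g₀} =
      univ.image fun σ : Equiv.Perm (Fin t) => g₀ ∘ σ := by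
    ext g
    simp only [mem_filter, mem_image, mem_univ, true_and]
    constructor
    · rintro ⟨hg, hrange⟩
      exact exists_perm_comp_eq_of_range_eq (hinj g₀ hg₀) (hinj g hg) hrange
    · rintro ⟨σ, rfl⟩
      exact ⟨hperm g₀ hg₀ σ, EquivLike.range_comp g₀ σ⟩
  have hcomp : Injective fun σ : Equiv.Perm (Fin t) => g₀ ∘ σ :=
    (hinj g₀ hg₀).comp_left.comp DFunLike.coe_injective
  rw [hfiber, card_image_of_injective _ hcomp, card_univ, Fintype.card_perm,
    Fintype.card_fin]

section BlockColoring

variable {α : Type*} {t : ℕ}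

open Classical in
noncomputable def blockColoring (g : Fin t → Finset α) (x : α) : Fin (t + 1) :=
  if h : ∃ j, x ∈ g j then h.choose.castSucc else Fin.last t

theorem blockColoring_of_mem {g : Fin t → Finset α} (hg : Pairwise (Disjoint on g)) {x : α}
    {j : Fin t} (hx : x ∈ g j) : blockColoring g x = j.castSucc := by
  have h : ∃ j, x ∈ g j := ⟨j, hx⟩
  rw [blockColoring, dif_pos h, hg.eq (not_disjoint_iff.2 ⟨x, h.choose_spec, hx⟩)]

theorem mem_of_blockColoring_eq_castSucc {g : Fin t → Finset α} {x : α} {j : Fin t}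
    (h : blockColoring g x = j.castSucc) : x ∈ g j := by
  unfold blockColoring at h
  split_ifs at h with hx
  · exact Fin.castSucc_injective t h ▸ hx.choose_spec
  · exact absurd h.symm (Fin.castSucc_ne_last j)

theorem notMem_of_blockColoring_eq_last {g : Fin t → Finset α} (hg : Pairwise (Disjoint on g))
    {x : α} (h : blockColoring g x = Fin.last t) (j : Fin t) : x ∉ g j := fun hx =>
  Fin.castSucc_ne_last j (blockColoring_of_mem hg hx ▸ h)

theorem eq_of_mem_of_blockColoring_eq {g : Fin t → Finset α} (hg : Pairwise (Disjoint on g))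
    {X : Fin (t + 1) → Finset α} (hX : Pairwise (Disjoint on X))
    (hXg : Set.range g = Set.range (X ∘ Fin.castSucc))
    {i i' : Fin (t + 1)} {x x' : α} (hx : x ∈ X i) (hx' : x' ∈ X i')
    (h : blockColoring g x = blockColoring g x') : i = i' := by
  have eq_last {i : Fin (t + 1)} {x : α} (hx : x ∈ X i) (hc : blockColoring g x = Fin.last t) :
      i = Fin.last t := by
    induction i using Fin.lastCases with
    | last => rfl
    | cast j =>
      obtain ⟨k, hk⟩ : X j.castSucc ∈ Set.range g := hXg ▸ ⟨j, rfl⟩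
      exact absurd (hk ▸ hx) (notMem_of_blockColoring_eq_last hg hc k)
  cases hc : blockColoring g x using Fin.lastCases with
  | last => rw [eq_last hx hc, eq_last hx' (h ▸ hc)]
  | cast k =>
    obtain ⟨j, hj⟩ : g k ∈ Set.range (X ∘ Fin.castSucc) := hXg ▸ ⟨k, rfl⟩
    have hxk := mem_of_blockColoring_eq_castSucc hc
    have hxk' := mem_of_blockColoring_eq_castSucc (h ▸ hc)
    rw [← hj] at hxk hxk'
    rw [hX.eq (not_disjoint_iff.2 ⟨x, hx, hxk⟩), hX.eq (not_disjoint_iff.2 ⟨x', hx', hxk'⟩)]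

theorem pairwise_disjoint_image_blockColoring {g : Fin t → Finset α}
    (hg : Pairwise (Disjoint on g)) {X : Fin (t + 1) → Finset α} (hX : Pairwise (Disjoint on X))
    (hXg : Set.range g = Set.range (X ∘ Fin.castSucc)) :
    Pairwise (Disjoint on fun i => (X i).image (blockColoring g)) := by
  intro i i' hii'
  simp only [onFun, disjoint_left, mem_image]
  rintro _ ⟨x, hx, rfl⟩ ⟨x', hx', h⟩
  exact hii' (eq_of_mem_of_blockColoring_eq hg hX hXg hx hx' h.symm)

end BlockColoring

theorem exists_isSHF_of_forall_castSucc_eq {n t w : ℕ} (hw : 0 < w) (ws : Fin (t + 1) → ℕ)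
    (hws : ∀ j : Fin t, ws j.castSucc = w) :
    ∃ (N : ℕ) (F : Fin N → Fin n → Fin (t + 1)),
      IsSHF F ws ∧ N * t ! = ∏ j ∈ range t, (n - j * w).choose w := by
  classical
  set T := disjointTuples (Fin n) w t
  set S := T.image Set.range
  have hrep (s : S) : ∃ g ∈ T, Set.range g = s := mem_image.1 s.2
  choose rep hrepT hrep using hrep
  refine ⟨#S, fun k => blockColoring (rep (S.equivFin.symm k)), ?_, ?_⟩
  · intro X hcard hdisj
    replace hdisj : Pairwise (Disjoint on X) := hdisj
    have hXT : X ∘ Fin.castSucc ∈ T := mem_disjointTuples.2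
      ⟨fun j => (hcard _).trans (hws j), hdisj.comp_of_injective (Fin.castSucc_injective t)⟩
    refine ⟨S.equivFin ⟨_, mem_image_of_mem _ hXT⟩, ?_⟩
    beta_reduce
    rw [Equiv.symm_apply_apply]
    exact pairwise_disjoint_image_blockColoring (mem_disjointTuples.1 (hrepT _)).2 hdisj (hrep _)
  · rw [← card_eq_card_image_range_mul_factorial T (fun _ => injective_of_mem_disjointTuples hw)
      (fun _ => comp_perm_mem_disjointTuples), card_disjointTuples, Fintype.card_fin]

theorem stmt_2_general (n q w1 w2 : ℕ) (hq : 2 ≤ q)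
    (hw1 : 1 ≤ w1) :
    ∃ (N : ℕ) (F : Fin N → Fin n → Fin q),
      IsSHF F (fun i : Fin q => if (i : ℕ) < q - 1 then w1 else w2) ∧
      N * Nat.factorial (q - 1) =
        ∏ j ∈ Finset.range (q - 1), Nat.choose (n - j * w1) w1 := by
  obtain ⟨t, rfl⟩ : ∃ t, q = t + 1 := ⟨q - 1, by omega⟩
  rw [Nat.add_sub_cancel]
  exact exists_isSHF_of_forall_castSucc_eq hw1 _ fun j => if_pos j.isLt

/-- There exists an `SHF(N; n, q, {w1^{q-1}, w2})` with
`N = (1/(q-1)!) · C(n,w1) · C(n-w1,w1) ⋯ C(n-(q-2)·w1, w1)`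
(stated multiplicatively: `N · (q-1)! = ∏_{j=0}^{q-2} C(n - j·w1, w1)`). -/
theorem stmt_2 (n q w1 w2 : ℕ) (hn : 1 ≤ n) (hq : 2 ≤ q)
    (hw1 : 1 ≤ w1) (hw12 : w1 < w2) (hle : w2 + (q - 1) * w1 ≤ n) :
    ∃ (N : ℕ) (F : Fin N → Fin n → Fin q),
      IsSHF F (fun i : Fin q => if (i : ℕ) < q - 1 then w1 else w2) ∧
      N * Nat.factorial (q - 1) =
        ∏ j ∈ Finset.range (q - 1), Nat.choose (n - j * w1) w1 :=
  stmt_2_general n q w1 w2 hq hw1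
end

section
/- Let w1, w2 be positive integers with w1 < w2, let q ≥ 2, and let i1, ..., i_{q-1}, n be integers with w1 ≤ ik < w2 for k = 1, ..., q-1 and n - (i1 + ... + i_{q-1}) ≥ w2. Let r be a vector in {0, 1, ..., q-1}^n that has exactly ik entries equal to k for each k = 1, ..., q-1 (and hence n - Σ ik entries equal to 0). Then the number of q-tuples (C1, ..., C_{q-1}, C0) of pairwise disjoint subsets of {1, ..., n} with |Ck| = w1 for k = 1, ..., q-1 and |C0| = w2, such that the sets r(C1), ..., r(C_{q-1}), r(C0) of values of r on these coordinate sets are pairwise disjoint, equals (q-1)! · C(i1, w1) · C(i2, w1) · ⋯ · C(i_{q-1}, w1) · C(n - (i1 + ... + i_{q-1}), w2). -/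
/-- Let `r` be a row of weight `(i 0, ..., i (q-2))`, i.e. having exactly
`i k` entries equal to the symbol `k+1` for each `k` (and hence `n - ∑ i k`
entries equal to `0`), where `w1 ≤ i k < w2` and `n - ∑ i k ≥ w2`.  Then the
number of column set `q`-tuples `(C 0, ..., C (q-2), C0)` of pairwise
disjoint subsets, with `|C k| = w1` and `|C0| = w2`, separated by `r`
(i.e. whose value sets under `r` are pairwise disjoint), equals
`(q-1)! · C(i 0, w1) ⋯ C(i (q-2), w1) · C(n - ∑ i k, w2)`. -/
theorem stmt_4 (n q w1 w2 : ℕ) (hq : 2 ≤ q) (hw1 : 1 ≤ w1) (hw12 : w1 < w2)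
    (i : Fin (q - 1) → ℕ) (hi1 : ∀ k, w1 ≤ i k) (hi2 : ∀ k, i k < w2)
    (hn : (∑ k, i k) + w2 ≤ n)
    (r : Fin n → Fin q)
    (hr : ∀ k : Fin (q - 1),
      (Finset.univ.filter fun c : Fin n =>
          r c = (⟨(k : ℕ) + 1, by have := k.isLt; omega⟩ : Fin q)).card = i k) :
    Set.ncard {C : (Fin (q - 1) → Finset (Fin n)) × Finset (Fin n) |
        (∀ k, (C.1 k).card = w1) ∧ C.2.card = w2 ∧
        (∀ k l, k ≠ l → Disjoint (C.1 k) (C.1 l)) ∧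
        (∀ k, Disjoint (C.1 k) C.2) ∧
        (∀ k l, k ≠ l → Disjoint ((C.1 k).image r) ((C.1 l).image r)) ∧
        (∀ k, Disjoint ((C.1 k).image r) (C.2.image r))} =
      Nat.factorial (q - 1) *
        ((∏ k, Nat.choose (i k) w1) * Nat.choose (n - ∑ k, i k) w2) := by
  classical
  -- the nonzero symbols
  set e : Fin (q - 1) → Fin q := fun k => ⟨(k : ℕ) + 1, by have := k.isLt; omega⟩ with he
  have he_inj : Function.Injective e := by
    intro a b h
    have : (a : ℕ) + 1 = (b : ℕ) + 1 := congrArg Fin.val h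
    exact Fin.ext (by omega)
  -- the zero symbol
  set z : Fin q := ⟨0, by omega⟩ with hz
  have hez : ∀ k, e k ≠ z := by
    intro k h
    have : (k : ℕ) + 1 = 0 := congrArg Fin.val h
    omega
  have hcases : ∀ u : Fin q, u = z ∨ ∃ k, u = e k := by
    intro u
    by_cases h : (u : ℕ) = 0
    · exact Or.inl (Fin.ext h)
    · refine Or.inr ⟨⟨(u : ℕ) - 1, by have := u.isLt; omega⟩, Fin.ext ?_⟩
      simp only [he]
      omega
  -- the fibers
  set F : Fin (q - 1) → Finset (Fin n) := fun k => Finset.univ.filter fun c => r c = e k with hF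
  set F0 : Finset (Fin n) := Finset.univ.filter fun c => r c = z with hF0
  have hFcard : ∀ k, (F k).card = i k := by
    intro k
    have := hr k
    convert this using 2
  have hvalF : ∀ k (s : Finset (Fin n)), s ⊆ F k → ∀ c ∈ s, r c = e k := by
    intro k s hs c hc
    have := hs hc
    simp only [hF, Finset.mem_filter] at this
    exact this.2
  have hvalF0 : ∀ (s : Finset (Fin n)), s ⊆ F0 → ∀ c ∈ s, r c = z := by
    intro s hs c hc
    have := hs hc
    simp only [hF0, Finset.mem_filter] at this
    exact this.2
  -- cardinality of the zero fiber
  have hF0card : F0.card = n - ∑ k, i k := by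
    have hsum : (Finset.univ : Finset (Fin n)).card
        = ∑ v : Fin q, (Finset.univ.filter fun c => r c = v).card :=
      Finset.card_eq_sum_card_fiberwise fun x _ => Finset.mem_univ _
    have himage : Finset.univ.image e = Finset.univ.erase z := by
      ext v
      simp only [Finset.mem_image, Finset.mem_univ, true_and, Finset.mem_erase, and_true]
      constructor
      · rintro ⟨k, rfl⟩; exact hez k
      · intro hv
        rcases hcases v with h | ⟨k, rfl⟩
        · exact absurd h hv
        · exact ⟨k, rfl⟩
    have h1 : ∑ v : Fin q, (Finset.univ.filter fun c => r c = v).card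
        = F0.card + ∑ k, (F k).card := by
      rw [← Finset.add_sum_erase _ _ (Finset.mem_univ z), ← himage,
        Finset.sum_image fun a _ b _ h => he_inj h]
    have h2 : n = F0.card + ∑ k, i k := by
      have hn' := hsum
      rw [Finset.card_univ, Fintype.card_fin] at hn'
      rw [h1, show ∑ k, (F k).card = ∑ k, i k from
        Finset.sum_congr rfl fun k _ => hFcard k] at hn'
      exact hn'
    omega
  -- distinct fibers are disjoint
  have hFdisj : ∀ {u v : Fin q}, u ≠ v →
      Disjoint (Finset.univ.filter fun c => r c = u) (Finset.univ.filter fun c => r c = v) := by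
    intro u v huv
    rw [Finset.disjoint_left]
    intro a ha hb
    simp only [Finset.mem_filter] at ha hb
    exact huv (ha.2 ▸ hb.2 ▸ rfl)
  -- the set as a finset
  set S : Finset ((Fin (q - 1) → Finset (Fin n)) × Finset (Fin n)) :=
    Finset.univ.filter fun C =>
      (∀ k, (C.1 k).card = w1) ∧ C.2.card = w2 ∧
        (∀ k l, k ≠ l → Disjoint (C.1 k) (C.1 l)) ∧
        (∀ k, Disjoint (C.1 k) C.2) ∧
        (∀ k l, k ≠ l → Disjoint ((C.1 k).image r) ((C.1 l).image r)) ∧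
        (∀ k, Disjoint ((C.1 k).image r) (C.2.image r)) with hS
  have hset : {C : (Fin (q - 1) → Finset (Fin n)) × Finset (Fin n) |
      (∀ k, (C.1 k).card = w1) ∧ C.2.card = w2 ∧
        (∀ k l, k ≠ l → Disjoint (C.1 k) (C.1 l)) ∧
        (∀ k, Disjoint (C.1 k) C.2) ∧
        (∀ k l, k ≠ l → Disjoint ((C.1 k).image r) ((C.1 l).image r)) ∧
        (∀ k, Disjoint ((C.1 k).image r) (C.2.image r))} = ↑S := by
    ext C
    simp [hS]
  rw [hset, Set.ncard_coe_finset]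
  -- the parametrizing finset
  set T : Finset (Equiv.Perm (Fin (q - 1)) × (Fin (q - 1) → Finset (Fin n)) × Finset (Fin n)) :=
    Finset.univ ×ˢ (Fintype.piFinset fun k => (F k).powersetCard w1) ×ˢ F0.powersetCard w2
    with hT
  have hTmem : ∀ a, a ∈ T ↔
      (∀ k, a.2.1 k ⊆ F k ∧ (a.2.1 k).card = w1) ∧ a.2.2 ⊆ F0 ∧ a.2.2.card = w2 := by
    intro a
    simp [hT, Finset.mem_product, Fintype.mem_piFinset, Finset.mem_powersetCard]
  have hTcard : T.card = Nat.factorial (q - 1) *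
      ((∏ k, Nat.choose (i k) w1) * Nat.choose (n - ∑ k, i k) w2) := by
    rw [hT, Finset.card_product, Finset.card_product, Finset.card_univ,
      Fintype.card_perm, Fintype.card_fin, Fintype.card_piFinset,
      Finset.card_powersetCard, hF0card]
    congr 2
    · exact Finset.prod_congr rfl fun k _ => by rw [Finset.card_powersetCard, hFcard]
  rw [← hTcard]
  -- the bijection
  refine (Finset.card_bij (fun a _ => (a.2.1 ∘ a.1, a.2.2)) ?_ ?_ ?_).symm
  · -- maps into S
    intro a ha
    rw [hTmem] at ha
    obtain ⟨hg, hs, hscard⟩ := ha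
    simp only [hS, Finset.mem_filter, Finset.mem_univ, true_and]
    refine ⟨fun k => (hg (a.1 k)).2, hscard, ?_, ?_, ?_, ?_⟩
    · intro k l hkl
      exact Finset.disjoint_of_subset_left (hg (a.1 k)).1
        (Finset.disjoint_of_subset_right (hg (a.1 l)).1
          (hFdisj fun h => hkl (a.1.injective (he_inj h))))
    · intro k
      exact Finset.disjoint_of_subset_left (hg (a.1 k)).1
        (Finset.disjoint_of_subset_right hs (hFdisj (hez (a.1 k))))
    · intro k l hkl
      rw [Finset.disjoint_left]
      intro u hu hv
      simp only [Function.comp, Finset.mem_image] at hu hv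
      obtain ⟨c, hc, rfl⟩ := hu
      obtain ⟨d, hd, hdc⟩ := hv
      have h1 := hvalF _ _ (hg (a.1 k)).1 c hc
      have h2 := hvalF _ _ (hg (a.1 l)).1 d hd
      exact hkl (a.1.injective (he_inj (h1 ▸ h2 ▸ hdc.symm)))
    · intro k
      rw [Finset.disjoint_left]
      intro u hu hv
      simp only [Function.comp, Finset.mem_image] at hu hv
      obtain ⟨c, hc, rfl⟩ := hu
      obtain ⟨d, hd, hdc⟩ := hv
      have h1 := hvalF _ _ (hg (a.1 k)).1 c hc
      have h2 := hvalF0 _ hs d hd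
      exact hez (a.1 k) (h1 ▸ h2 ▸ hdc.symm)
  · -- injective
    intro a ha b hb hab
    rw [hTmem] at ha hb
    obtain ⟨hga, hsa, -⟩ := ha
    obtain ⟨hgb, hsb, -⟩ := hb
    have hab' : ((a.2.1 ∘ a.1, a.2.2) : (Fin (q-1) → Finset (Fin n)) × Finset (Fin n))
        = (b.2.1 ∘ b.1, b.2.2) := hab
    obtain ⟨h1, h2⟩ := Prod.ext_iff.mp hab'
    have hperm : a.1 = b.1 := by
      ext k
      by_contra hne
      have hk : a.2.1 (a.1 k) = b.2.1 (b.1 k) := congrFun h1 k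
      have hne' : e (a.1 k) ≠ e (b.1 k) := fun h => hne (congrArg Fin.val (he_inj h))
      have hnonempty : (a.2.1 (a.1 k)).Nonempty := by
        rw [← Finset.card_pos, (hga (a.1 k)).2]; omega
      obtain ⟨c, hc⟩ := hnonempty
      have hc1 := hvalF _ _ (hga (a.1 k)).1 c hc
      have hc2 := hvalF _ _ (hgb (b.1 k)).1 c (hk ▸ hc)
      exact hne' (hc1 ▸ hc2 ▸ rfl)
    have hfun : a.2.1 = b.2.1 := by
      funext k
      have := congrFun h1 (a.1.symm k)
      simpa [hperm] using this
    obtain ⟨a1, a2, a3⟩ := a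
    obtain ⟨b1, b2, b3⟩ := b
    simp_all
  · -- surjective
    intro C hC
    simp only [hS, Finset.mem_filter, Finset.mem_univ, true_and] at hC
    obtain ⟨h1, h2, h3, h4, h5, h6⟩ := hC
    -- the value sets, indexed by Option (Fin (q-1))
    set V : Option (Fin (q - 1)) → Finset (Fin q) :=
      fun o => o.elim (C.2.image r) fun k => (C.1 k).image r with hV
    have hVdisj : ∀ o o' : Option (Fin (q - 1)), o ≠ o' → Disjoint (V o) (V o') := by
      rintro (_ | k) (_ | l) hne
      · exact absurd rfl hne
      · exact (h6 l).symm
      · exact h6 k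
      · exact h5 k l fun h => hne (by rw [h])
    have hVne : ∀ o, 1 ≤ (V o).card := by
      rintro (_ | k)
      · exact Finset.card_pos.mpr ((Finset.card_pos.mp (by omega : 0 < C.2.card)).image r)
      · exact Finset.card_pos.mpr ((Finset.card_pos.mp (by rw [h1 k]; omega)).image r)
    have hVone : ∀ o, (V o).card = 1 := by
      by_contra hcon
      push_neg at hcon
      obtain ⟨o₀, ho₀⟩ := hcon
      have hlt : ∑ _o : Option (Fin (q - 1)), 1 < ∑ o, (V o).card :=
        Finset.sum_lt_sum (fun o _ => hVne o)
          ⟨o₀, Finset.mem_univ _, lt_of_le_of_ne (hVne o₀) (Ne.symm ho₀)⟩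
      have hsum : ∑ o, (V o).card = (Finset.univ.biUnion V).card :=
        (Finset.card_biUnion fun x _ y _ h => hVdisj x y h).symm
      have hle : (Finset.univ.biUnion V).card ≤ q := by
        have := Finset.card_le_univ (Finset.univ.biUnion V)
        simpa using this
      have hcard : ∑ _o : Option (Fin (q - 1)), 1 = q := by
        simp only [Finset.sum_const, smul_eq_mul, mul_one, Finset.card_univ,
          Fintype.card_option, Fintype.card_fin]
        omega
      omega
    have hVsing : ∀ o, ∃ v, V o = {v} := fun o => Finset.card_eq_one.mp (hVone o)
    choose v hv using hVsing
    have hvne : ∀ o o', o ≠ o' → v o ≠ v o' := by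
      intro o o' hne hveq
      have := hVdisj o o' hne
      rw [hv o, hv o', hveq] at this
      simp at this
    have hmemk : ∀ k, ∀ c ∈ C.1 k, r c = v (some k) := by
      intro k c hc
      have : r c ∈ V (some k) := by
        simp only [hV, Option.elim, Finset.mem_image]; exact ⟨c, hc, rfl⟩
      rw [hv (some k), Finset.mem_singleton] at this
      exact this
    have hmem0 : ∀ c ∈ C.2, r c = v none := by
      intro c hc
      have : r c ∈ V none := by
        simp only [hV, Option.elim, Finset.mem_image]; exact ⟨c, hc, rfl⟩
      rw [hv none, Finset.mem_singleton] at this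
      exact this
    -- v none = z
    have hv0 : v none = z := by
      rcases hcases (v none) with h | ⟨k', hk'⟩
      · exact h
      · exfalso
        have hsub : C.2 ⊆ F k' := by
          intro c hc
          simp only [hF, Finset.mem_filter, Finset.mem_univ, true_and]
          rw [hmem0 c hc, hk']
        have := Finset.card_le_card hsub
        rw [h2, hFcard] at this
        have := hi2 k'
        omega
    -- each v (some k) is a nonzero symbol
    have hvk : ∀ k, ∃ k', v (some k) = e k' := by
      intro k
      rcases hcases (v (some k)) with h | h
      · exact absurd (h.trans hv0.symm) (hvne (some k) none (by simp))
      · exact h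
    choose τ hτ using hvk
    have hτinj : Function.Injective τ := by
      intro a b hab
      by_contra hne
      exact hvne (some a) (some b) (by simpa using hne) (by rw [hτ a, hτ b, hab])
    have hτbij := Finite.injective_iff_bijective.mp hτinj
    set σ : Equiv.Perm (Fin (q - 1)) := Equiv.ofBijective τ hτbij with hσ
    refine ⟨(σ, fun k => C.1 (σ.symm k), C.2), ?_, ?_⟩
    · rw [hTmem]
      refine ⟨fun k => ⟨?_, h1 _⟩, ?_, h2⟩
      · intro c hc
        simp only [hF, Finset.mem_filter, Finset.mem_univ, true_and]
        rw [hmemk _ c hc, hτ]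
        congr 1
        exact σ.apply_symm_apply k
      · intro c hc
        simp only [hF0, Finset.mem_filter, Finset.mem_univ, true_and]
        rw [hmem0 c hc, hv0]
    · have : (fun k => C.1 (σ.symm k)) ∘ σ = C.1 := by
        funext k
        simp
      exact Prod.ext this rfl
end

section
/- Let w1, w2 be positive integers with w1 < w2, and let q, n be positive integers with q ≥ 2 and w2 + (q-1)·w1 ≤ n ≤ w2 + (q-1)·w1 + w2/w1 - 1 (where w2/w1 denotes the rational quotient, i.e., the upper bound means n·w1 ≤ w1·w2 + (q-1)·w1² + w2 - w1). Then for all integers i1, ..., i_{q-1} with ik ≥ w1 for each k and n - (i1 + ... + i_{q-1}) - 1 ≥ w2, and for every k ∈ {1, ..., q-1}, we have T(i1, ..., i_{q-1}) > T(i1, ..., i_{k-1}, ik + 1, i_{k+1}, ..., i_{q-1}), where T(i1, ..., i_{q-1}) = C(i1, w1) · C(i2, w1) · ⋯ · C(i_{q-1}, w1) · C(n - (i1 + ... + i_{q-1}), w2). -/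
/-- `T(i 0, ..., i (m-1)) = C(i 0, w1) ⋯ C(i (m-1), w1) · C(n - ∑ i k, w2)`. -/
def T (w1 w2 n : ℕ) {m : ℕ} (i : Fin m → ℕ) : ℕ :=
  (∏ k, Nat.choose (i k) w1) * Nat.choose (n - ∑ k, i k) w2

lemma core_ineq (w1 w2 a M : ℕ) (hw1 : 1 ≤ w1) (ha : w1 ≤ a) (hM : w2 + 1 ≤ M)
    (key : w1 * M < (a + 1) * w2) :
    Nat.choose (a + 1) w1 * Nat.choose (M - 1) w2 < Nat.choose a w1 * Nat.choose M w2 := by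
  have h1 : Nat.choose a w1 * (a + 1) = Nat.choose (a + 1) w1 * (a + 1 - w1) :=
    Nat.choose_mul_succ_eq a w1
  have h2 : Nat.choose (M - 1) w2 * M = Nat.choose M w2 * (M - w2) := by
    have := Nat.choose_mul_succ_eq (M - 1) w2
    rwa [Nat.sub_add_cancel (by omega)] at this
  have hCpos : 0 < Nat.choose (a + 1) w1 * Nat.choose M w2 :=
    Nat.mul_pos (Nat.choose_pos (by omega)) (Nat.choose_pos (by omega))
  have harith : (a + 1) * (M - w2) < (a + 1 - w1) * M := by
    zify [show w2 ≤ M by omega, show w1 ≤ a + 1 by omega]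
    nlinarith [key]
  have hmul : (Nat.choose (a + 1) w1 * Nat.choose (M - 1) w2) * ((a + 1) * M)
      < (Nat.choose a w1 * Nat.choose M w2) * ((a + 1) * M) := by
    calc (Nat.choose (a + 1) w1 * Nat.choose (M - 1) w2) * ((a + 1) * M)
        = (Nat.choose (a + 1) w1 * Nat.choose M w2) * ((a + 1) * (M - w2)) := by
          rw [show (Nat.choose (a + 1) w1 * Nat.choose (M - 1) w2) * ((a + 1) * M)
              = (Nat.choose (a + 1) w1 * (a + 1)) * (Nat.choose (M - 1) w2 * M) by ring, h2]
          ring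
      _ < (Nat.choose (a + 1) w1 * Nat.choose M w2) * ((a + 1 - w1) * M) :=
          Nat.mul_lt_mul_of_pos_left harith hCpos
      _ = (Nat.choose a w1 * Nat.choose M w2) * ((a + 1) * M) := by
          rw [show (Nat.choose (a + 1) w1 * Nat.choose M w2) * ((a + 1 - w1) * M)
              = (Nat.choose (a + 1) w1 * (a + 1 - w1)) * (Nat.choose M w2 * M) by ring, ← h1]
          ring
  exact Nat.lt_of_mul_lt_mul_right hmul

/-- If `w2 + (q-1)·w1 ≤ n ≤ w2 + (q-1)·w1 + w2/w1 - 1` (the upper bound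
written as `n·w1 ≤ w1·w2 + (q-1)·w1² + w2 - w1`), then increasing any
coordinate `i k` (with all `i k ≥ w1` and `n - ∑ i k - 1 ≥ w2`) strictly
decreases `T`. -/
theorem stmt_5 (n q w1 w2 : ℕ) (hn : 1 ≤ n) (hq : 2 ≤ q)
    (hw1 : 1 ≤ w1) (hw12 : w1 < w2)
    (hlow : w2 + (q - 1) * w1 ≤ n)
    (hhigh : n * w1 ≤ w1 * w2 + (q - 1) * w1 ^ 2 + w2 - w1)
    (i : Fin (q - 1) → ℕ) (hi : ∀ k, w1 ≤ i k)
    (hdom : (∑ k, i k) + 1 + w2 ≤ n) :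
    ∀ k : Fin (q - 1),
      T w1 w2 n i > T w1 w2 n (Function.update i k (i k + 1)) := by
  intro k
  obtain ⟨q', rfl⟩ : ∃ q', q = q' + 2 := ⟨q - 2, by omega⟩
  simp only [show q' + 2 - 1 = q' + 1 from rfl] at *
  set S := ∑ j, i j with hS
  set a := i k with ha
  -- split sum/product at k
  have hsumsplit : a + ∑ j ∈ Finset.univ.erase k, i j = S :=
    Finset.add_sum_erase _ i (Finset.mem_univ k)
  have hsum : ∑ j, Function.update i k (a + 1) j = S + 1 := by
    rw [← Finset.add_sum_erase _ _ (Finset.mem_univ k), Function.update_self]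
    rw [Finset.sum_congr rfl (fun j hj =>
      Function.update_of_ne (Finset.ne_of_mem_erase hj) _ _)]
    omega
  set P := ∏ j ∈ Finset.univ.erase k, Nat.choose (i j) w1 with hP
  have hprod : ∏ j, Nat.choose (i j) w1 = Nat.choose a w1 * P :=
    (Finset.mul_prod_erase _ _ (Finset.mem_univ k)).symm
  have hprod' : ∏ j, Nat.choose (Function.update i k (a + 1) j) w1
      = Nat.choose (a + 1) w1 * P := by
    rw [← Finset.mul_prod_erase _ _ (Finset.mem_univ k), Function.update_self]
    congr 1
    exact Finset.prod_congr rfl (fun j hj => by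
      rw [Function.update_of_ne (Finset.ne_of_mem_erase hj)])
  have hPpos : 0 < P :=
    Finset.prod_pos (fun j _ => Nat.choose_pos (hi j))
  -- lower bound on S
  have hSlb : a + (q' : ℕ) * w1 ≤ S := by
    rw [← hsumsplit]
    have hcard : (Finset.univ.erase k).card = q' := by
      rw [Finset.card_erase_of_mem (Finset.mem_univ k)]
      simp
    have := Finset.card_nsmul_le_sum (Finset.univ.erase k) i w1
      (fun j _ => hi j)
    rw [hcard, smul_eq_mul] at this
    exact Nat.add_le_add_left this a
  -- key inequality
  have key : w1 * (n - S) < (a + 1) * w2 := by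
    have haw : w1 * w2 ≤ a * w2 := Nat.mul_le_mul_right _ (hi k)
    have hSw : w1 * (a + q' * w1) ≤ w1 * S := Nat.mul_le_mul_left _ hSlb
    have h1 := hhigh
    have h4 := hi k
    zify [show S ≤ n by omega] 
    zify [show w1 ≤ w1 * w2 + (q' + 1) * w1 ^ 2 + w2 by nlinarith] at h1
    zify at haw hSw h4
    nlinarith [h1, haw, hSw, h4]
  -- assemble
  have hM : w2 + 1 ≤ n - S := by omega
  have hcore := core_ineq w1 w2 a (n - S) hw1 (hi k) hM key
  unfold T
  rw [hsum, hprod, hprod']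
  have hMM : n - (S + 1) = n - S - 1 := by omega
  rw [hMM]
  calc Nat.choose (a + 1) w1 * P * Nat.choose (n - S - 1) w2
      = P * (Nat.choose (a + 1) w1 * Nat.choose (n - S - 1) w2) := by ring
    _ < P * (Nat.choose a w1 * Nat.choose (n - S) w2) :=
        Nat.mul_lt_mul_of_pos_left hcore hPpos
    _ = Nat.choose a w1 * P * Nat.choose (n - S) w2 := by ring
end

section
/- Let w1, w2 be positive integers with w1 < w2, and let q, n be positive integers with q ≥ 2 and w2 + (q-1)·w1 ≤ n ≤ w2 + (q-1)·w1 + w2/w1 - 1 (i.e., n·w1 ≤ w1·w2 + (q-1)·w1² + w2 - w1). Then for all integers i1, ..., i_{q-1} with ik ≥ w1 for each k and n - (i1 + ... + i_{q-1}) ≥ w2, we have T(i1, ..., i_{q-1}) ≤ T(w1, w1, ..., w1), where T(i1, ..., i_{q-1}) = C(i1, w1) · ⋯ · C(i_{q-1}, w1) · C(n - (i1 + ... + i_{q-1}), w2); that is, T attains its maximum over this domain at (w1, ..., w1). -/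
lemma step_ineq (w1 w2 a b : ℕ) (hw1 : 1 ≤ w1) (ha : w1 + 1 ≤ a) (hb : w2 ≤ b)
    (key : w1 * (b + 1) ≤ w2 * a) :
    Nat.choose a w1 * Nat.choose b w2 ≤ Nat.choose (a - 1) w1 * Nat.choose (b + 1) w2 := by
  have h1 : Nat.choose (a - 1) w1 * a = Nat.choose a w1 * (a - w1) := by
    have := Nat.choose_mul_succ_eq (a - 1) w1
    have ha1 : a - 1 + 1 = a := by omega
    rwa [ha1] at this
  have h2 : Nat.choose b w2 * (b + 1) = Nat.choose (b + 1) w2 * (b + 1 - w2) :=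
    Nat.choose_mul_succ_eq b w2
  have hd : 0 < (a - w1) * (b + 1 - w2) := by
    apply Nat.mul_pos <;> omega
  apply Nat.le_of_mul_le_mul_right _ hd
  have hkey' : a * (b + 1 - w2) ≤ (a - w1) * (b + 1) := by
    zify [show w2 ≤ b + 1 by omega, show w1 ≤ a by omega]
    nlinarith [key]
  calc Nat.choose a w1 * Nat.choose b w2 * ((a - w1) * (b + 1 - w2))
      = (Nat.choose a w1 * (a - w1)) * (Nat.choose b w2 * (b + 1 - w2)) := by ring
    _ = (Nat.choose (a - 1) w1 * a) * (Nat.choose b w2 * (b + 1 - w2)) := by rw [h1]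
    _ = (Nat.choose (a - 1) w1 * Nat.choose b w2) * (a * (b + 1 - w2)) := by ring
    _ ≤ (Nat.choose (a - 1) w1 * Nat.choose b w2) * ((a - w1) * (b + 1)) :=
        Nat.mul_le_mul_left _ hkey'
    _ = Nat.choose (a - 1) w1 * (Nat.choose b w2 * (b + 1)) * (a - w1) := by ring
    _ = Nat.choose (a - 1) w1 * (Nat.choose (b + 1) w2 * (b + 1 - w2)) * (a - w1) := by rw [h2]
    _ = Nat.choose (a - 1) w1 * Nat.choose (b + 1) w2 * ((a - w1) * (b + 1 - w2)) := by ring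

lemma aux_main (w1 w2 n m : ℕ) (hw1 : 1 ≤ w1) (hw12 : w1 < w2) (hm : 1 ≤ m)
    (hhigh : n * w1 + w1 ≤ w1 * w2 + m * w1 ^ 2 + w2) :
    ∀ s : ℕ, ∀ i : Fin m → ℕ, ∑ k, i k = s → (∀ k, w1 ≤ i k) →
      (∑ k, i k) + w2 ≤ n → T w1 w2 n i ≤ T w1 w2 n (fun _ : Fin m => w1) := by
  intro s
  induction s using Nat.strong_induction_on with
  | _ s ih =>
    intro i hsum hi hdom
    by_cases hall : ∀ k, i k = w1
    · have hie : i = fun _ : Fin m => w1 := funext hall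
      rw [hie]
    · push_neg at hall
      obtain ⟨k, hk⟩ := hall
      have hak : w1 + 1 ≤ i k := by
        have := hi k; omega
      set a := i k with ha_def
      have hsplit : ∑ j, i j = a + ∑ j ∈ Finset.univ.erase k, i j :=
        (Finset.add_sum_erase _ i (Finset.mem_univ k)).symm
      -- lower bound on erased sum
      have hcard : (Finset.univ.erase k).card = m - 1 := by
        rw [Finset.card_erase_of_mem (Finset.mem_univ k)]
        simp
      have herase_lb : (m - 1) * w1 ≤ ∑ j ∈ Finset.univ.erase k, i j := by
        calc (m - 1) * w1 = (Finset.univ.erase k).card • w1 := by rw [hcard]; simp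
          _ ≤ ∑ j ∈ Finset.univ.erase k, i j :=
            Finset.card_nsmul_le_sum _ _ _ (fun j _ => hi j)
      have hs_lb : a + (m - 1) * w1 ≤ s := by omega
      have hs1 : 1 ≤ s := by
        have := hi k; omega
      -- the updated tuple
      set i' : Fin m → ℕ := Function.update i k (a - 1) with hi'_def
      have hsum' : ∑ j, i' j = s - 1 := by
        have h1 : ∑ j, i' j = (a - 1) + ∑ j ∈ Finset.univ.erase k, i j := by
          rw [hi'_def, Finset.sum_update_of_mem (Finset.mem_univ k), ← Finset.erase_eq]
        omega
      have hi' : ∀ j, w1 ≤ i' j := by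
        intro j
        by_cases hj : j = k
        · subst hj; simp [hi'_def]; omega
        · simp [hi'_def, Function.update_of_ne hj]; exact hi j
      have hdom' : (∑ j, i' j) + w2 ≤ n := by omega
      -- key inequality
      have key : w1 * ((n - s) + 1) ≤ w2 * a := by
        zify [show s ≤ n by omega]
        nlinarith [hhigh, hs_lb, hdom, hak, hw12, hw1, hm, hsum,
          Nat.sub_add_cancel hm]
      -- T i ≤ T i'
      have hstep : T w1 w2 n i ≤ T w1 w2 n i' := by
        have hb : w2 ≤ n - s := by omega
        have hb1 : n - (s - 1) = (n - s) + 1 := by omega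
        have hPi : ∏ j, Nat.choose (i j) w1
            = Nat.choose a w1 * ∏ j ∈ Finset.univ.erase k, Nat.choose (i j) w1 :=
          (Finset.mul_prod_erase _ _ (Finset.mem_univ k)).symm
        have hPi' : ∏ j, Nat.choose (i' j) w1
            = Nat.choose (a - 1) w1 * ∏ j ∈ Finset.univ.erase k, Nat.choose (i j) w1 := by
          rw [← Finset.mul_prod_erase _ _ (Finset.mem_univ k)]
          congr 1
          · simp [hi'_def]
          · exact Finset.prod_congr rfl (fun j hj => by
              rw [hi'_def, Function.update_of_ne (Finset.ne_of_mem_erase hj)])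
        unfold T
        rw [hsum, hsum', hPi, hPi', hb1]
        calc Nat.choose a w1 * (∏ j ∈ Finset.univ.erase k, Nat.choose (i j) w1)
              * Nat.choose (n - s) w2
            = (Nat.choose a w1 * Nat.choose (n - s) w2)
              * ∏ j ∈ Finset.univ.erase k, Nat.choose (i j) w1 := by ring
          _ ≤ (Nat.choose (a - 1) w1 * Nat.choose ((n - s) + 1) w2)
              * ∏ j ∈ Finset.univ.erase k, Nat.choose (i j) w1 :=
              Nat.mul_le_mul_right _ (step_ineq w1 w2 a (n - s) hw1 hak hb key)
          _ = Nat.choose (a - 1) w1 * (∏ j ∈ Finset.univ.erase k, Nat.choose (i j) w1)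
              * Nat.choose ((n - s) + 1) w2 := by ring
      exact le_trans hstep (ih (s - 1) (by omega) i' hsum' hi' hdom')

/-- If `w2 + (q-1)·w1 ≤ n ≤ w2 + (q-1)·w1 + w2/w1 - 1` (the upper bound
written as `n·w1 ≤ w1·w2 + (q-1)·w1² + w2 - w1`), then over all integer
tuples with `i k ≥ w1` and `n - ∑ i k ≥ w2`, the quantity `T` attains its
maximum at `(w1, ..., w1)`. -/
theorem stmt_6 (n q w1 w2 : ℕ) (hn : 1 ≤ n) (hq : 2 ≤ q)
    (hw1 : 1 ≤ w1) (hw12 : w1 < w2)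
    (hlow : w2 + (q - 1) * w1 ≤ n)
    (hhigh : n * w1 ≤ w1 * w2 + (q - 1) * w1 ^ 2 + w2 - w1)
    (i : Fin (q - 1) → ℕ) (hi : ∀ k, w1 ≤ i k)
    (hdom : (∑ k, i k) + w2 ≤ n) :
    T w1 w2 n i ≤ T w1 w2 n (fun _ : Fin (q - 1) => w1) := by
  have hm : 1 ≤ q - 1 := by omega
  have hhigh' : n * w1 + w1 ≤ w1 * w2 + (q - 1) * w1 ^ 2 + w2 := by omega
  exact aux_main w1 w2 n (q - 1) hw1 hw12 hm hhigh' (∑ k, i k) i rfl hi hdom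
end

section
/- Let w, N be positive integers such that w ≥ 3 and w + 1 ≤ N ≤ 2w + 1. If there exists an SHF(N; n, 2, {1, w}), then n ≤ N. -/
private lemma fin2_trick : ∀ a b c : Fin 2, a ≠ b → c ≠ b → a = c := by decide

private lemma key (n w N : ℕ) (hw : 3 ≤ w) (hN1 : w + 1 ≤ N) (hN2 : N ≤ 2 * w + 1)
    (hn : N < n) (F : Fin N → Fin n → Fin 2)
    (hsep : ∀ (x : Fin n) (W : Finset (Fin n)), W.card = w → x ∉ W →
      ∃ k, ∀ y ∈ W, F k y ≠ F k x) : False := by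
  classical
  -- padded separation: any set of size ≤ w avoiding x can be separated
  have hsep' : ∀ (x : Fin n) (S : Finset (Fin n)), x ∉ S → S.card ≤ w →
      ∃ k, ∀ y ∈ S, F k y ≠ F k x := by
    intro x S hxS hcard
    have hST : S ⊆ Finset.univ.erase x := by
      intro y hy
      exact Finset.mem_erase.mpr ⟨fun h => hxS (h ▸ hy), Finset.mem_univ y⟩
    have hTcard : w ≤ (Finset.univ.erase x).card := by
      rw [Finset.card_erase_of_mem (Finset.mem_univ x), Finset.card_univ, Fintype.card_fin]
      omega
    obtain ⟨W, hSW, hWT, hWcard⟩ := Finset.exists_subsuperset_card_eq hST hcard hTcard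
    have hxW : x ∉ W := fun h => by
      have := Finset.mem_erase.mp (hWT h); exact this.1 rfl
    obtain ⟨k, hk⟩ := hsep x W hWcard hxW
    exact ⟨k, fun y hy => hk y (hSW hy)⟩
  -- there is a non-isolated point
  have hexx : ∃ x : Fin n, ∀ k, ∃ y, y ≠ x ∧ F k y = F k x := by
    by_contra hall
    push_neg at hall
    choose g hg using hall
    have hginj : Function.Injective g := by
      intro a b hab
      by_contra hne
      have hab2 : F (g a) b ≠ F (g a) a := hg a b (Ne.symm hne)
      have hab3 : F (g b) a ≠ F (g b) b := hg b a hne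
      -- third point
      have hle2 : ({a, b} : Finset (Fin n)).card ≤ 2 := Finset.card_le_two
      have hpos : 0 < (Finset.univ \ ({a, b} : Finset (Fin n))).card := by
        rw [Finset.card_sdiff_of_subset (Finset.subset_univ _), Finset.card_univ, Fintype.card_fin]
        omega
      obtain ⟨c, hcmem⟩ := Finset.card_pos.mp hpos
      have hc := (Finset.mem_sdiff.mp hcmem).2
      simp only [Finset.mem_insert, Finset.mem_singleton, not_or] at hc
      have hca : F (g a) c ≠ F (g a) a := hg a c hc.1
      have hcb : F (g b) c ≠ F (g b) b := hg b c hc.2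
      rw [hab] at hab2 hca
      exact hcb (fin2_trick _ _ _ hab2 hca).symm
    have := Fintype.card_le_of_injective g hginj
    simp only [Fintype.card_fin] at this
    omega
  obtain ⟨x, hx⟩ := hexx
  set T : Finset (Fin n) := Finset.univ.erase x with hTdef
  have hxT : x ∉ T := fun h => (Finset.mem_erase.mp h).1 rfl
  have hTc : T.card = n - 1 := by
    rw [hTdef, Finset.card_erase_of_mem (Finset.mem_univ x), Finset.card_univ, Fintype.card_fin]
  -- PredS S : every coordinate has an agreeing member of S
  -- minimal S ⊆ T with PredS
  have hNE : (T.powerset.filter (fun S => ∀ k, ∃ y ∈ S, F k y = F k x)).Nonempty := by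
    refine ⟨T, Finset.mem_filter.mpr ⟨Finset.mem_powerset.mpr (le_refl T), ?_⟩⟩
    intro k
    obtain ⟨y, hy1, hy2⟩ := hx k
    exact ⟨y, Finset.mem_erase.mpr ⟨hy1, Finset.mem_univ y⟩, hy2⟩
  obtain ⟨S, hSmem, hSmin⟩ := Finset.exists_min_image _ Finset.card hNE
  rw [Finset.mem_filter, Finset.mem_powerset] at hSmem
  obtain ⟨hST, hS⟩ := hSmem
  have hxS : x ∉ S := fun h => hxT (hST h)
  have hSmin' : ∀ S' : Finset (Fin n), S' ⊆ T → (∀ k, ∃ y ∈ S', F k y = F k x) →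
      S.card ≤ S'.card := by
    intro S' h1 h2
    exact hSmin S' (Finset.mem_filter.mpr ⟨Finset.mem_powerset.mpr h1, h2⟩)
  -- S has at least w+1 elements
  have hm : w + 1 ≤ S.card := by
    by_contra h
    push_neg at h
    obtain ⟨k, hk⟩ := hsep' x S hxS (by omega)
    obtain ⟨y, hy1, hy2⟩ := hS k
    exact hk y hy1 hy2
  -- private coordinates p i for i ∈ S
  have hp : ∀ i ∈ S, ∃ k, (∀ z ∈ S, z ≠ i → F k z ≠ F k x) ∧ F k i = F k x := by
    intro i hi
    have hlt : (S.erase i).card < S.card := Finset.card_erase_lt_of_mem hi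
    have hnot : ¬ (∀ k, ∃ y ∈ S.erase i, F k y = F k x) := by
      intro h
      have := hSmin' (S.erase i) ((Finset.erase_subset _ _).trans hST) h
      omega
    push_neg at hnot
    obtain ⟨k, hk⟩ := hnot
    refine ⟨k, fun z hz hzi => hk z (Finset.mem_erase.mpr ⟨hzi, hz⟩), ?_⟩
    obtain ⟨y, hy1, hy2⟩ := hS k
    by_cases hyi : y = i
    · exact hyi ▸ hy2
    · exact absurd hy2 (hk y (Finset.mem_erase.mpr ⟨hyi, hy1⟩))
  have hNne : Nonempty (Fin N) := ⟨⟨0, by omega⟩⟩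
  choose! p hp1 hp2 using hp
  set P : Finset (Fin N) := S.image p with hPdef
  have hpinjOn : ∀ i ∈ S, ∀ j ∈ S, p i = p j → i = j := by
    intro i hi j hj hij
    by_contra hne
    have h1 : F (p i) j ≠ F (p i) x := hp1 i hi j hj (Ne.symm hne)
    rw [hij] at h1
    exact h1 (hp2 j hj)
  have hPcard : P.card = S.card := Finset.card_image_of_injOn hpinjOn
  have hPc2 : (Finset.univ \ P).card = N - S.card := by
    rw [Finset.card_sdiff_of_subset (Finset.subset_univ P), Finset.card_univ, Fintype.card_fin, hPcard]
  -- membership characterization for P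
  have hmemP : ∀ k i, i ∈ S → F k i = F k x → k ∈ P → k = p i := by
    intro k i hi hki hkP
    obtain ⟨l, hl, hlk⟩ := Finset.mem_image.mp hkP
    subst hlk
    by_cases hil : i = l
    · subst hil; rfl
    · exact absurd hki (hp1 l hl i hi hil)
  -- the claim C : for i ∈ S and J ⊆ S.erase i of card w-1,
  -- there is k ∉ P with F k i ≠ F k x and F k j = F k x for all j ∈ J
  have hC : ∀ i ∈ S, ∀ J ⊆ S.erase i, J.card = w - 1 →
      ∃ k, k ∉ P ∧ F k i ≠ F k x ∧ ∀ j ∈ J, F k j = F k x := by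
    intro i hi J hJ hJcard
    have hJS : J ⊆ S := hJ.trans (Finset.erase_subset _ _)
    have hxJ : x ∉ J := fun h => hxS (hJS h)
    have hiJ : i ∉ J := fun h => (Finset.mem_erase.mp (hJ h)).1 rfl
    have hix : i ≠ x := fun h => hxS (h ▸ hi)
    have hiW : i ∉ insert x J := by
      simp only [Finset.mem_insert]; push_neg; exact ⟨hix, hiJ⟩
    have hWcard : (insert x J).card = w := by
      rw [Finset.card_insert_of_notMem hxJ, hJcard]; omega
    obtain ⟨k, hk⟩ := hsep i (insert x J) hWcard hiW
    have hxk : F k x ≠ F k i := hk x (Finset.mem_insert_self x _)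
    have hjk : ∀ j ∈ J, F k j = F k x := by
      intro j hj
      exact fin2_trick _ _ _ (hk j (Finset.mem_insert_of_mem hj)) hxk
    refine ⟨k, ?_, Ne.symm hxk, hjk⟩
    -- k ∉ P : otherwise two distinct elements of J both equal the image index
    intro hkP
    have hJ2 : 1 < J.card := by omega
    obtain ⟨j1, hj1, j2, hj2, hj12⟩ := Finset.one_lt_card.mp hJ2
    have e1 := hmemP k j1 (hJS hj1) (hjk j1 hj1) hkP
    have e2 := hmemP k j2 (hJS hj2) (hjk j2 hj2) hkP
    have : j1 = j2 := hpinjOn j1 (hJS hj1) j2 (hJS hj2) (e1 ▸ e2 ▸ rfl)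
    exact hj12 this
  -- dichotomy
  by_cases hA : ∀ i ∈ S, ∃ k, k ∉ P ∧ F k i ≠ F k x ∧ ∀ j ∈ S, j ≠ i → F k j = F k x
  · -- Option A : injective map into univ \ P
    choose! g hg1 hg2 hg3 using hA
    have hginj : ∀ i ∈ S, ∀ j ∈ S, g i = g j → i = j := by
      intro i hi j hj hij
      by_contra hne
      have h1 : F (g j) i = F (g j) x := hg3 j hj i hi hne
      rw [← hij] at h1
      exact hg2 i hi h1
    have hsub : S.image g ⊆ Finset.univ \ P := by
      intro k hk
      obtain ⟨i, hi, rfl⟩ := Finset.mem_image.mp hk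
      exact Finset.mem_sdiff.mpr ⟨Finset.mem_univ _, hg1 i hi⟩
    have hcard := Finset.card_le_card hsub
    rw [Finset.card_image_of_injOn hginj, hPc2] at hcard
    omega
  · -- Option B
    push_neg at hA
    obtain ⟨i, hi, hB⟩ := hA
    -- hB : ∀ k ∉ P, F k i ≠ F k x → ∃ j ∈ S, j ≠ i ∧ F k j ≠ F k x
    have hBE : ∀ k, k ∉ P → F k i ≠ F k x → ∃ j ∈ S.erase i, F k j ≠ F k x := by
      intro k h1 h2
      obtain ⟨j, hj, hji, hjne⟩ := hB k h1 h2
      exact ⟨j, Finset.mem_erase.mpr ⟨hji, hj⟩, hjne⟩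
    -- minimal T₀ ⊆ S.erase i with the "emptiness" property
    have hNE2 : ((S.erase i).powerset.filter
        (fun T' => ∀ k, k ∉ P → F k i ≠ F k x → ∃ j ∈ T', F k j ≠ F k x)).Nonempty :=
      ⟨S.erase i, Finset.mem_filter.mpr ⟨Finset.mem_powerset.mpr (le_refl _), hBE⟩⟩
    obtain ⟨T₀, hT₀mem, hT₀min⟩ := Finset.exists_min_image _ Finset.card hNE2
    rw [Finset.mem_filter, Finset.mem_powerset] at hT₀mem
    obtain ⟨hT₀sub, hT₀⟩ := hT₀mem
    have hT₀min' : ∀ T' : Finset (Fin n), T' ⊆ S.erase i →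
        (∀ k, k ∉ P → F k i ≠ F k x → ∃ j ∈ T', F k j ≠ F k x) → T₀.card ≤ T'.card := by
      intro T' h1 h2
      exact hT₀min T' (Finset.mem_filter.mpr ⟨Finset.mem_powerset.mpr h1, h2⟩)
    -- T₀ has at least w elements
    have htw : w ≤ T₀.card := by
      by_contra h
      push_neg at h
      have hcc : (S.erase i).card = S.card - 1 := Finset.card_erase_of_mem hi
      have hx1 : T₀.card ≤ w - 1 := by omega
      have hx2 : w - 1 ≤ (S.erase i).card := by omega
      obtain ⟨J, hJ1, hJ2, hJ3⟩ := Finset.exists_subsuperset_card_eq hT₀sub hx1 hx2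
      obtain ⟨k, hk1, hk2, hk3⟩ := hC i hi J hJ2 hJ3
      obtain ⟨j, hj1, hj2⟩ := hT₀ k hk1 hk2
      exact hj2 (hk3 j (hJ1 hj1))
    -- witnesses q j for j ∈ T₀
    have hq : ∀ j ∈ T₀, ∃ k, k ∉ P ∧ F k i ≠ F k x ∧ F k j ≠ F k x ∧
        (∀ z ∈ T₀, z ≠ j → F k z = F k x) := by
      intro j hj
      have hlt : (T₀.erase j).card < T₀.card := Finset.card_erase_lt_of_mem hj
      have hnot : ¬ (∀ k, k ∉ P → F k i ≠ F k x → ∃ z ∈ T₀.erase j, F k z ≠ F k x) := by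
        intro h
        have := hT₀min' (T₀.erase j) ((Finset.erase_subset _ _).trans hT₀sub) h
        omega
      push_neg at hnot
      obtain ⟨k, hk1, hk2, hk3⟩ := hnot
      refine ⟨k, hk1, hk2, ?_, fun z hz hzj =>
        hk3 z (Finset.mem_erase.mpr ⟨hzj, hz⟩)⟩
      obtain ⟨j', hj'1, hj'2⟩ := hT₀ k hk1 hk2
      by_cases hjj : j' = j
      · exact hjj ▸ hj'2
      · exact absurd (hk3 j' (Finset.mem_erase.mpr ⟨hjj, hj'1⟩)) hj'2
    choose! q hq1 hq2 hq3 hq4 using hq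
    have hqinj : ∀ a ∈ T₀, ∀ b ∈ T₀, q a = q b → a = b := by
      intro a ha b hb hab
      by_contra hne
      have h1 : F (q b) a = F (q b) x := hq4 b hb a ha hne
      rw [← hab] at h1
      exact hq3 a ha h1
    -- the image of q is all of univ \ P
    have hqsub : T₀.image q ⊆ Finset.univ \ P := by
      intro k hk
      obtain ⟨j, hj, rfl⟩ := Finset.mem_image.mp hk
      exact Finset.mem_sdiff.mpr ⟨Finset.mem_univ _, hq1 j hj⟩
    have himg : Finset.univ \ P = T₀.image q := by
      refine (Finset.eq_of_subset_of_card_le hqsub ?_).symm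
      rw [Finset.card_image_of_injOn hqinj, hPc2]
      omega
    -- so i disagrees with x at every coordinate outside P
    have hQ : ∀ k, k ∉ P → F k i ≠ F k x := by
      intro k hk
      have : k ∈ Finset.univ \ P := Finset.mem_sdiff.mpr ⟨Finset.mem_univ _, hk⟩
      rw [himg] at this
      obtain ⟨j, hj, rfl⟩ := Finset.mem_image.mp this
      exact hq2 j hj
    -- final contradiction
    obtain ⟨j₀, hj₀S, hj₀i⟩ := Finset.exists_mem_ne (show 1 < S.card by omega) i
    -- choose J' ⊆ (S.erase i).erase j₀ of card w - 2
    have hcc : w - 2 ≤ ((S.erase i).erase j₀).card := by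
      have h1 : (S.erase i).card = S.card - 1 := Finset.card_erase_of_mem hi
      have h2 : ((S.erase i).erase j₀).card ≥ (S.erase i).card - 1 :=
        Finset.pred_card_le_card_erase
      omega
    obtain ⟨J', hJ'sub, hJ'card⟩ := Finset.exists_subset_card_eq hcc
    have hJ'S : J' ⊆ S := fun z hz =>
      (Finset.erase_subset _ _) ((Finset.erase_subset _ _) (hJ'sub hz))
    have hiJ' : i ∉ J' := fun h =>
      (Finset.mem_erase.mp ((Finset.erase_subset _ _) (hJ'sub h))).1 rfl
    have hj₀J' : j₀ ∉ J' := fun h => (Finset.mem_erase.mp (hJ'sub h)).1 rfl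
    have hxJ' : x ∉ J' := fun h => hxS (hJ'S h)
    have hix : i ≠ x := fun h => hxS (h ▸ hi)
    have hj₀x : j₀ ≠ x := fun h => hxS (h ▸ hj₀S)
    set W : Finset (Fin n) := insert x (insert i J') with hWdef
    have hxiJ' : x ∉ insert i J' := by
      simp only [Finset.mem_insert]; push_neg; exact ⟨Ne.symm hix, hxJ'⟩
    have hWcard : W.card = w := by
      rw [hWdef, Finset.card_insert_of_notMem hxiJ',
        Finset.card_insert_of_notMem hiJ', hJ'card]
      omega
    have hj₀W : j₀ ∉ W := by
      simp only [hWdef, Finset.mem_insert]; push_neg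
      exact ⟨hj₀x, hj₀i, hj₀J'⟩
    obtain ⟨k, hk⟩ := hsep j₀ W hWcard hj₀W
    have hkx : F k x ≠ F k j₀ := hk x (Finset.mem_insert_self x _)
    have hki : F k i = F k x :=
      fin2_trick _ _ _ (hk i (Finset.mem_insert_of_mem (Finset.mem_insert_self i _))) hkx
    have hkP : k ∈ P := by
      by_contra h
      exact hQ k h hki
    have hkpi : k = p i := hmemP k i hi hki hkP
    -- take some j' ∈ J'
    have hJ'ne : J'.Nonempty := by
      rw [← Finset.card_pos, hJ'card]; omega
    obtain ⟨j', hj'⟩ := hJ'ne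
    have hkj' : F k j' = F k x :=
      fin2_trick _ _ _
        (hk j' (Finset.mem_insert_of_mem (Finset.mem_insert_of_mem hj'))) hkx
    have : j' = i := by
      by_contra hne
      exact hp1 i hi j' (hJ'S hj') hne (hkpi ▸ hkj')
    exact hiJ' (this ▸ hj')

/-- If `w ≥ 3`, `w + 1 ≤ N ≤ 2w + 1`, and an `SHF(N; n, 2, {1, w})` exists,
then `n ≤ N`. -/
theorem stmt_11 (n w N : ℕ) (hw : 3 ≤ w) (hN1 : w + 1 ≤ N) (hN2 : N ≤ 2 * w + 1)
    (F : Fin N → Fin n → Fin 2) (hF : IsSHF F ![1, w]) :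
    n ≤ N := by
  by_contra hn
  push_neg at hn
  refine key n w N hw hN1 hN2 hn F ?_
  intro x W hWcard hxW
  obtain ⟨k, hk⟩ := hF ![{x}, W]
    (by intro i; fin_cases i <;> simp [hWcard])
    (by
      intro i j hij
      fin_cases i <;> fin_cases j <;>
        simp_all [Finset.disjoint_singleton_left, Finset.disjoint_singleton_right])
  refine ⟨k, fun y hy h => ?_⟩
  have h01 := hk 0 1 (by decide)
  simp only [Matrix.cons_val_zero, Matrix.cons_val_one, Matrix.head_cons,
    Finset.image_singleton] at h01
  exact (Finset.disjoint_singleton_left.mp h01) (Finset.mem_image.mpr ⟨y, hy, h⟩)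
end
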